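/- arXiv:1307.2419 — 2 statements merged into one kernel-verified Lean document; each statement's English description precedes it below -/
import Mathlib

section
/- The Jacobian determinant of the transformation λ = u(a/|u| - 1) on {u : 0 < |u| < a} equals -(a/|u| - 1)^(n-1). -/
/-!
Writing `R u = φ ‖u‖ • u` with `φ t = a / t - 1`, the derivative of `R` at `u` is the scalar
`φ ‖u‖` plus the rank-one map `v ↦ (φ' ‖u‖ / ‖u‖) ⟪u, v⟫ u`. By the matrix determinant lemma its
determinant is `φ ‖u‖ ^ (n - 1) * (φ ‖u‖ + ‖u‖ φ' ‖u‖)`, and `φ t + t φ' t = -1` identically.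
-/

open Matrix Polynomial in
theorem Matrix.det_smul_one_add_vecMulVec {n R : Type*} [Fintype n] [DecidableEq n] [CommRing R]
    (c : R) (u v : n → R) :
    (c • (1 : Matrix n n R) + vecMulVec u v).det =
      c ^ Fintype.card n + (v ⬝ᵥ u) * c ^ (Fintype.card n - 1) := by
  have h := congrArg (eval c) (charpoly_vecMulVec (-u) v)
  rw [eval_charpoly] at h
  simpa [smul_one_eq_diagonal, neg_vecMulVec, sub_neg_eq_add, dotProduct_comm, neg_dotProduct]
    using h

theorem LinearMap.det_smul_id_add_smulRight {R M : Type*} [CommRing R] [AddCommGroup M]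
    [Module R M] [Module.Free R M] [Module.Finite R M] (c : R) (f : M →ₗ[R] R) (v : M) :
    LinearMap.det (c • LinearMap.id + f.smulRight v) =
      c ^ Module.finrank R M + f v * c ^ (Module.finrank R M - 1) := by
  nontriviality R
  let b := Module.Free.chooseBasis R M
  rw [← LinearMap.det_toMatrix b, map_add, map_smul, LinearMap.toMatrix_id,
    LinearMap.toMatrix_smulRight, Matrix.det_smul_one_add_vecMulVec,
    Module.finrank_eq_card_chooseBasisIndex]
  congr 2
  simp only [dotProduct, Function.comp_apply, mul_comm, ← smul_eq_mul, ← map_smul, ← map_sum,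
    b.sum_repr]

theorem hasStrictFDerivAt_norm {E : Type*} [NormedAddCommGroup E] [InnerProductSpace ℝ E]
    {x : E} (hx : x ≠ 0) : HasStrictFDerivAt (‖·‖) (‖x‖⁻¹ • innerSL ℝ x) x := by
  have hsqrt : (‖·‖ : E → ℝ) = (√·) ∘ (‖·‖ ^ 2) :=
    funext fun y ↦ (Real.sqrt_sq (norm_nonneg y)).symm
  rw [hsqrt]
  refine ((Real.hasStrictDerivAt_sqrt (by positivity)).comp_hasStrictFDerivAt x
    (hasStrictFDerivAt_norm_sq x)).congr_fderiv ?_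
  rw [Real.sqrt_sq (norm_nonneg x)]
  ext y
  simp only [one_div, mul_inv_rev, smul_apply, coe_innerSL_apply, nsmul_eq_mul, Nat.cast_ofNat,
    smul_eq_mul]
  field_simp

theorem HasDerivAt.hasFDerivAt_comp_norm_smul {E : Type*} [NormedAddCommGroup E]
    [InnerProductSpace ℝ E] {φ : ℝ → ℝ} {φ' : ℝ} {x : E} (hφ : HasDerivAt φ φ' ‖x‖)
    (hx : x ≠ 0) :
    HasFDerivAt (fun y ↦ φ ‖y‖ • y)
      (φ ‖x‖ • ContinuousLinearMap.id ℝ E + ((φ' / ‖x‖) • innerSL ℝ x).smulRight x) x := by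
  refine ((hφ.comp_hasFDerivAt x (hasStrictFDerivAt_norm hx).hasFDerivAt).smul
    (hasFDerivAt_id x)).congr_fderiv ?_
  rw [smul_smul, div_eq_mul_inv]
  rfl

theorem stmt3_general (n : ℕ) (hn : 1 ≤ n) (a : ℝ)
    (R : EuclideanSpace ℝ (Fin n) → EuclideanSpace ℝ (Fin n))
    (hR : ∀ u, R u = (a / ‖u‖ - 1) • u)
    (u : EuclideanSpace ℝ (Fin n)) (hu0 : 0 < ‖u‖) :
    LinearMap.det ((fderiv ℝ R u) : EuclideanSpace ℝ (Fin n) →ₗ[ℝ] EuclideanSpace ℝ (Fin n)) =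
      -(a / ‖u‖ - 1) ^ (n - 1) := by
  have hφ : HasDerivAt (fun t ↦ a / t - 1) (-(a / ‖u‖ ^ 2)) ‖u‖ := by
    simpa [div_eq_mul_inv] using ((hasDerivAt_inv hu0.ne').const_mul a).sub_const 1
  have hRu := hφ.hasFDerivAt_comp_norm_smul (norm_pos_iff.1 hu0)
  rw [← funext hR] at hRu
  rw [hRu.fderiv, ContinuousLinearMap.toLinearMap_add, ContinuousLinearMap.toLinearMap_smul,
    ContinuousLinearMap.coe_id, ContinuousLinearMap.coe_smulRight,
    LinearMap.det_smul_id_add_smulRight, finrank_euclideanSpace_fin]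
  simp only [ContinuousLinearMap.coe_coe, smul_apply, innerSL_apply_apply,
    real_inner_self_eq_norm_sq, smul_eq_mul]
  have hφ_add_mul_deriv : a / ‖u‖ - 1 + -(a / ‖u‖ ^ 2) / ‖u‖ * ‖u‖ ^ 2 = -1 := by
    field_simp
    ring
  obtain ⟨m, rfl⟩ := Nat.exists_eq_add_of_le' hn
  rw [Nat.add_sub_cancel, pow_succ]
  linear_combination (a / ‖u‖ - 1) ^ m * hφ_add_mul_deriv

/-- The Jacobian determinant of `λ = (a/|u| - 1) • u` on `{0 < |u| < a}`
equals `-(a/|u| - 1)^(n-1)`. -/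
theorem stmt3 (n : ℕ) (hn : 1 ≤ n) (a : ℝ) (ha : 0 < a)
    (R : EuclideanSpace ℝ (Fin n) → EuclideanSpace ℝ (Fin n))
    (hR : ∀ u, R u = (a / ‖u‖ - 1) • u)
    (u : EuclideanSpace ℝ (Fin n)) (hu0 : 0 < ‖u‖) (hua : ‖u‖ < a) :
    LinearMap.det ((fderiv ℝ R u) : EuclideanSpace ℝ (Fin n) →ₗ[ℝ] EuclideanSpace ℝ (Fin n)) =
      -(a / ‖u‖ - 1) ^ (n - 1) :=
  stmt3_general n hn a R hR u hu0
end

section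
/- Let g₀,…,g_k : ℝ → ℝ be even functions, each essentially nonzero (nonzero on a set of positive measure), and suppose each g_j satisfies g_j(s)² ≤ C/sⁿ for all s ≥ s₀ for some s₀ ≥ 0, C > 0, n ≥ 1. Fix distinct points 0 = a₀ < a₁ < … < a_k. If for some index i there exist constants C̃_j (j ≠ i) such that g_i(r(|λ| - a_i)) = Σ_{j≠i} C̃_j g_j(r(|λ| - a_j)) for all λ ∈ ℝⁿ and all r > 0, then g_i ≡ 0, a contradiction. Hence no such representation exists. -/
/-!
Fix `s ≥ 0` and choose `λ` with `‖λ‖ = a_i + s / r`: the identity becomes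
`g_i(s) = ∑_{j ≠ i} c_j g_j(s + r (a_i - a_j))` for every `r > 0`. Since the `a_j` are distinct,
each argument `s + r (a_i - a_j)` tends to `±∞` as `r → ∞`, where `g_j` vanishes by the decay
bound and evenness. Hence `g_i(s) = 0` for `s ≥ 0`, so `g_i ≡ 0` by evenness, contradicting
`g_i ≠ 0` on a set of positive measure.
-/

open MeasureTheory Finset Filter Topology

theorem tendsto_zero_of_sq_le_div_pow {g : ℝ → ℝ} {n : ℕ} (hn : n ≠ 0) {s₀ C : ℝ}
    (hle : ∀ s ≥ s₀, g s ^ 2 ≤ C / s ^ n) : Tendsto g atTop (𝓝 0) := by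
  have hbound : Tendsto (fun s : ℝ => √(C / s ^ n)) atTop (𝓝 0) := by
    simpa only [Real.sqrt_zero] using
      (tendsto_const_nhds.div_atTop (tendsto_pow_atTop hn)).sqrt
  rw [tendsto_zero_iff_abs_tendsto_zero]
  refine squeeze_zero' (.of_forall fun s => abs_nonneg _) ?_ hbound
  filter_upwards [eventually_ge_atTop s₀] with s hs
  exact Real.abs_le_sqrt (hle s hs)

namespace Function.Even

variable {α : Type*} {g : ℝ → α} {l : Filter α}

theorem tendsto_atBot (hg : g.Even) (h : Tendsto g atTop l) : Tendsto g atBot l :=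
  (h.comp tendsto_neg_atBot_atTop).congr fun s => hg s

theorem tendsto_comp_add_mul_atTop (hg : g.Even) (h : Tendsto g atTop l) (s : ℝ) {d : ℝ}
    (hd : d ≠ 0) : Tendsto (fun r => g (s + r * d)) atTop l := by
  rcases hd.lt_or_gt with hneg | hpos
  · exact (hg.tendsto_atBot h).comp
      (tendsto_atBot_add_const_left _ s (tendsto_id.atTop_mul_const_of_neg hneg))
  · exact h.comp (tendsto_atTop_add_const_left _ s (tendsto_id.atTop_mul_const hpos))

end Function.Even

theorem eq_zero_of_forall_eq_sum_shift {ι : Type*} [Fintype ι] [DecidableEq ι] {a : ι → ℝ}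
    (ha : Function.Injective a) {g : ι → ℝ → ℝ} (heven : ∀ j, (g j).Even)
    (hlim : ∀ j, Tendsto (g j) atTop (𝓝 0)) {i : ι} (hai : 0 ≤ a i) (c : ι → ℝ)
    (h : ∀ t ≥ 0, ∀ r > 0,
      g i (r * (t - a i)) = ∑ j ∈ univ.erase i, c j * g j (r * (t - a j))) :
    g i = 0 := by
  have hnonneg : ∀ s ≥ 0, g i s = 0 := by
    intro s hs
    have hrep : ∀ r > 0, g i s = ∑ j ∈ univ.erase i, c j * g j (s + r * (a i - a j)) := by
      intro r hr
      have hshift : ∀ j, r * (a i + s / r - a j) = s + r * (a i - a j) := by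
        intro j
        field_simp
        ring
      simpa only [hshift, sub_self, mul_zero, add_zero] using
        h (a i + s / r) (by positivity) r hr
    have hsum : Tendsto (fun r => ∑ j ∈ univ.erase i, c j * g j (s + r * (a i - a j)))
        atTop (𝓝 0) := by
      simpa only [mul_zero, sum_const_zero] using tendsto_finsetSum _ fun j hj =>
        ((heven j).tendsto_comp_add_mul_atTop (hlim j) s
          (sub_ne_zero.2 (ha.ne (ne_of_mem_erase hj).symm))).const_mul (c j)
    exact tendsto_nhds_unique tendsto_const_nhds <|
      hsum.congr' <| (eventually_gt_atTop 0).mono fun r hr => (hrep r hr).symm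
  funext s
  rcases le_total 0 s with hs | hs
  · exact hnonneg s hs
  · rw [← heven i s]
    exact hnonneg (-s) (neg_nonneg.2 hs)

/-- Uniqueness lemma: for even, essentially nonzero functions `g_j` with the
decay `g_j(s)² ≤ C/sⁿ` for large `s`, no `g_i(r(|λ| - a_i))` can be represented
as a linear combination of the `g_j(r(|λ| - a_j))`, `j ≠ i`. -/
theorem stmt7 (n k : ℕ) (hn : 1 ≤ n)
    (a : Fin (k+1) → ℝ) (ha0 : a 0 = 0) (hamono : StrictMono a)
    (g : Fin (k+1) → ℝ → ℝ)
    (heven : ∀ j s, g j (-s) = g j s)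
    (hnz : ∀ j, 0 < volume {s : ℝ | g j s ≠ 0})
    (hdecay : ∀ j, ∃ s₀ ≥ (0:ℝ), ∃ C > (0:ℝ), ∀ s ≥ s₀, (g j s) ^ 2 ≤ C / s ^ n) :
    ¬ ∃ (i : Fin (k+1)) (c : Fin (k+1) → ℝ),
        ∀ (l : EuclideanSpace ℝ (Fin n)), ∀ r > (0:ℝ),
          g i (r * (‖l‖ - a i)) =
            ∑ j ∈ Finset.univ.erase i, c j * g j (r * (‖l‖ - a j)) := by
  rintro ⟨i, c, hrep⟩
  have : Nonempty (Fin n) := ⟨⟨0, hn⟩⟩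
  have hlim : ∀ j, Tendsto (g j) atTop (𝓝 0) := fun j => by
    obtain ⟨s₀, -, C, -, hle⟩ := hdecay j
    exact tendsto_zero_of_sq_le_div_pow (by omega) hle
  have hgi : g i = 0 := by
    refine eq_zero_of_forall_eq_sum_shift hamono.injective heven hlim
      (ha0 ▸ hamono.monotone (Fin.zero_le i)) c fun t ht r hr => ?_
    obtain ⟨l, rfl⟩ := exists_norm_eq (EuclideanSpace ℝ (Fin n)) ht
    exact hrep l r hr
  simpa [hgi] using hnz i
end
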